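/- arXiv:1801.01754 — 5 statements merged into one kernel-verified Lean document; each statement's English description precedes it below -/
import Mathlib

section
/- Let k ≥ 5 and D be natural numbers, V a finite set, A : V × V → ℕ a nonnegative integer matrix, and L : V → ℤ/kℤ a layer assignment. Assume: (1) for each v ∈ V, ∑_u A(v,u) ≤ D; (2) for each v with L(v) ∉ {1,3} and each u with A(v,u) ≠ 0, L(u) = L(v) + 1; (3) for each v with L(v) = 1 and each u with A(v,u) ≠ 0, L(u) ∈ {2,3}; (4) for each v with L(v) = 3 and each u with A(v,u) ≠ 0, L(u) ∈ {3,4}, and moreover if L(u) = 3 then every w with A(u,w) ≠ 0 satisfies L(w) = 4; (5) for each v with L(v) ∉ {1,2,3}, ∑_u A(v,u) = 1. Then for every v ∈ V, ∑_u (A^{k-1})(v,u) ≤ 4·D^4. -/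
/-!
Write `r m w = ∑ u, (A ^ m) w u` for the number of paths of length `m` starting at `w`; then
`r (m + 1) w = ∑ u, A w u * r m u`, so a step multiplies the count by at most `D`, and by at
most `1` at a vertex outside layers `1, 2, 3`. Hence only the layers `1, 2, 3` branch, and a path
crosses the window `1 → 2 → 3 → 3 → 4` with at most four branching steps. Starting again from
layer `4` it needs `k - 3` non-branching steps to come back to layer `1`, so a path of length
`k - 1` never branches in a second crossing and `r (k - 1) w ≤ D ^ 4`.
-/

open Finset

namespace Matrix

variable {V : Type*} [Fintype V] [DecidableEq V]

theorem sum_pow_succ_apply {R : Type*} [Semiring R] (A : Matrix V V R) (m : ℕ) (w : V) :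
    ∑ u, (A ^ (m + 1)) w u = ∑ u, A w u * ∑ x, (A ^ m) u x := by
  simp only [pow_succ', mul_apply, mul_sum]
  exact sum_comm

theorem sum_pow_zero_apply {R : Type*} [Semiring R] (A : Matrix V V R) (w : V) :
    ∑ u, (A ^ 0) w u = 1 := by
  simp [one_apply]

theorem sum_pow_succ_apply_le {A : Matrix V V ℕ} {m B : ℕ} {w : V}
    (h : ∀ u, A w u ≠ 0 → ∑ x, (A ^ m) u x ≤ B) :
    ∑ u, (A ^ (m + 1)) w u ≤ (∑ u, A w u) * B := by
  rw [sum_pow_succ_apply, sum_mul]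
  refine sum_le_sum fun u _ => ?_
  by_cases hu : A w u = 0
  · simp [hu]
  · exact Nat.mul_le_mul_left _ (h u hu)

theorem sum_pow_apply_le_pow {A : Matrix V V ℕ} {D : ℕ} (h1 : ∀ v, ∑ u, A v u ≤ D)
    (m : ℕ) (w : V) : ∑ u, (A ^ m) w u ≤ D ^ m := by
  induction m generalizing w with
  | zero => exact (sum_pow_zero_apply A w).le
  | succ m ih =>
    calc _ ≤ (∑ u, A w u) * D ^ m := sum_pow_succ_apply_le fun u _ => ih u
      _ ≤ D ^ (m + 1) := by rw [pow_succ']; exact Nat.mul_le_mul_right _ (h1 w)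

end Matrix

theorem ZMod.natCast_ne_zero_of_pos_of_lt {k n : ℕ} (h0 : 0 < n) (hn : n < k) :
    (n : ZMod k) ≠ 0 := by
  rw [ne_eq, ZMod.natCast_eq_zero_iff]
  exact fun h => absurd (Nat.le_of_dvd h0 h) (by omega)

section Layered

open Matrix

variable {V : Type*} [Fintype V] [DecidableEq V] {k D : ℕ} {A : Matrix V V ℕ} {L : V → ZMod k}

theorem sum_pow_apply_le_of_add_eq_one
    (h2 : ∀ v : V, L v ≠ 1 → L v ≠ 3 → ∀ u : V, A v u ≠ 0 → L u = L v + 1)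
    (h5 : ∀ v : V, L v ≠ 1 → L v ≠ 2 → L v ≠ 3 → ∑ u, A v u = 1)
    {N : ℕ} {g : ℕ → ℕ} (hg0 : 1 ≤ g 0)
    (hg : ∀ u, L u = 1 → ∀ n ≤ N, ∑ x, (A ^ n) u x ≤ g n)
    {j : ℕ} (hj : j + 3 ≤ k) {w : V} (hw : L w + j = 1) {m : ℕ} (hm : m ≤ N + j) :
    ∑ x, (A ^ m) w x ≤ g (m - j) := by
  -- Before reaching layer `1` the path only visits the layers `1 - j, …, 0`, which avoid
  -- `1, 2, 3` because `j + 3 ≤ k`; there every out-degree is `1`.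
  induction j generalizing w m with
  | zero => simpa using hg w (by simpa using hw) m (by omega)
  | succ j ih =>
    have hw_ne (c : ℕ) (hc0 : 0 < c) (hc : c ≤ 3) : L w ≠ c := by
      intro hwc
      refine ZMod.natCast_ne_zero_of_pos_of_lt (k := k) (n := c + j) (by omega) (by omega) ?_
      push_cast at hw ⊢
      linear_combination hw - hwc
    have hw1 : L w ≠ 1 := by exact_mod_cast hw_ne 1 (by omega) (by omega)
    have hw2 : L w ≠ 2 := by exact_mod_cast hw_ne 2 (by omega) (by omega)
    have hw3 : L w ≠ 3 := by exact_mod_cast hw_ne 3 (by omega) (by omega)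
    cases m with
    | zero => exact (sum_pow_zero_apply A w).trans_le (by simpa using hg0)
    | succ m =>
      calc _ ≤ (∑ u, A w u) * g (m - j) := sum_pow_succ_apply_le fun u hu =>
            ih (by omega) (by push_cast at hw; rw [h2 w hw1 hw3 u hu]; linear_combination hw)
              (by omega)
        _ = g (m + 1 - (j + 1)) := by rw [h5 w hw1 hw2 hw3, one_mul, Nat.add_sub_add_right]

theorem sum_pow_apply_le_of_layer_four (h1 : ∀ v : V, ∑ u, A v u ≤ D)
    (h2 : ∀ v : V, L v ≠ 1 → L v ≠ 3 → ∀ u : V, A v u ≠ 0 → L u = L v + 1)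
    (h5 : ∀ v : V, L v ≠ 1 → L v ≠ 2 → L v ≠ 3 → ∑ u, A v u = 1)
    (hk : 3 ≤ k) {w : V} (hw : L w = 4) (m : ℕ) :
    ∑ x, (A ^ m) w x ≤ D ^ (m - (k - 3)) := by
  refine sum_pow_apply_le_of_add_eq_one h2 h5 (N := m) (by simp)
    (fun u _ n _ => sum_pow_apply_le_pow h1 n u) (by omega) ?_ (by omega)
  rw [hw, Nat.cast_sub hk, ZMod.natCast_self]
  ring

theorem sum_pow_apply_le_of_successors_layer_four (h1 : ∀ v : V, ∑ u, A v u ≤ D)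
    (h2 : ∀ v : V, L v ≠ 1 → L v ≠ 3 → ∀ u : V, A v u ≠ 0 → L u = L v + 1)
    (h5 : ∀ v : V, L v ≠ 1 → L v ≠ 2 → L v ≠ 3 → ∑ u, A v u = 1)
    (hk : 3 ≤ k) (hD : 1 ≤ D) {w : V} (hw : ∀ u, A w u ≠ 0 → L u = 4) {m : ℕ}
    (hm : m ≤ k - 2) : ∑ x, (A ^ m) w x ≤ D := by
  cases m with
  | zero => exact (sum_pow_zero_apply A w).trans_le hD
  | succ m =>
    calc _ ≤ (∑ u, A w u) * 1 := sum_pow_succ_apply_le fun u hu => by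
          simpa [show m - (k - 3) = 0 by omega] using
            sum_pow_apply_le_of_layer_four h1 h2 h5 hk (hw u hu) m
      _ ≤ D := by simpa using h1 w

theorem sum_pow_apply_le_of_layer_three (h1 : ∀ v : V, ∑ u, A v u ≤ D)
    (h2 : ∀ v : V, L v ≠ 1 → L v ≠ 3 → ∀ u : V, A v u ≠ 0 → L u = L v + 1)
    (h4 : ∀ v : V, L v = 3 → ∀ u : V, A v u ≠ 0 →
      (L u = 3 ∨ L u = 4) ∧ (L u = 3 → ∀ w : V, A u w ≠ 0 → L w = 4))
    (h5 : ∀ v : V, L v ≠ 1 → L v ≠ 2 → L v ≠ 3 → ∑ u, A v u = 1)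
    (hk : 3 ≤ k) (hD : 1 ≤ D) {w : V} (hw : L w = 3) {m : ℕ} (hm : m ≤ k - 1) :
    ∑ x, (A ^ m) w x ≤ D ^ 2 := by
  cases m with
  | zero => exact (sum_pow_zero_apply A w).trans_le (Nat.one_le_pow _ _ hD)
  | succ m =>
    have hsucc (u : V) (hu : A w u ≠ 0) : ∑ x, (A ^ m) u x ≤ D := by
      obtain ⟨hu34, hforced⟩ := h4 w hw u hu
      rcases hu34 with hu3 | hu4
      · exact sum_pow_apply_le_of_successors_layer_four h1 h2 h5 hk hD (hforced hu3) (by omega)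
      · calc _ ≤ D ^ (m - (k - 3)) := sum_pow_apply_le_of_layer_four h1 h2 h5 hk hu4 m
          _ ≤ D ^ 1 := Nat.pow_le_pow_right hD (by omega)
          _ = D := pow_one D
    calc _ ≤ (∑ u, A w u) * D := sum_pow_succ_apply_le hsucc
      _ ≤ D ^ 2 := by rw [sq]; exact Nat.mul_le_mul_right _ (h1 w)

theorem sum_pow_apply_le_of_layer_two (h1 : ∀ v : V, ∑ u, A v u ≤ D)
    (h2 : ∀ v : V, L v ≠ 1 → L v ≠ 3 → ∀ u : V, A v u ≠ 0 → L u = L v + 1)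
    (h4 : ∀ v : V, L v = 3 → ∀ u : V, A v u ≠ 0 →
      (L u = 3 ∨ L u = 4) ∧ (L u = 3 → ∀ w : V, A u w ≠ 0 → L w = 4))
    (h5 : ∀ v : V, L v ≠ 1 → L v ≠ 2 → L v ≠ 3 → ∑ u, A v u = 1)
    (hk : 3 ≤ k) (hD : 1 ≤ D) {w : V} (hw : L w = 2) {m : ℕ} (hm : m ≤ k - 1) :
    ∑ x, (A ^ m) w x ≤ D ^ 3 := by
  have h10 : (1 : ZMod k) ≠ 0 := by
    exact_mod_cast ZMod.natCast_ne_zero_of_pos_of_lt (k := k) one_pos (by omega)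
  have hw1 : L w ≠ 1 := fun h => h10 (by linear_combination h - hw)
  have hw3 : L w ≠ 3 := fun h => h10 (by linear_combination hw - h)
  cases m with
  | zero => exact (sum_pow_zero_apply A w).trans_le (Nat.one_le_pow _ _ hD)
  | succ m =>
    calc _ ≤ (∑ u, A w u) * D ^ 2 := sum_pow_succ_apply_le fun u hu =>
          sum_pow_apply_le_of_layer_three h1 h2 h4 h5 hk hD
            (by rw [h2 w hw1 hw3 u hu, hw]; norm_num) (by omega)
      _ ≤ D ^ 3 := by rw [pow_succ' D 2]; exact Nat.mul_le_mul_right _ (h1 w)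

theorem sum_pow_apply_le_of_layer_one (h1 : ∀ v : V, ∑ u, A v u ≤ D)
    (h2 : ∀ v : V, L v ≠ 1 → L v ≠ 3 → ∀ u : V, A v u ≠ 0 → L u = L v + 1)
    (h3 : ∀ v : V, L v = 1 → ∀ u : V, A v u ≠ 0 → L u = 2 ∨ L u = 3)
    (h4 : ∀ v : V, L v = 3 → ∀ u : V, A v u ≠ 0 →
      (L u = 3 ∨ L u = 4) ∧ (L u = 3 → ∀ w : V, A u w ≠ 0 → L w = 4))
    (h5 : ∀ v : V, L v ≠ 1 → L v ≠ 2 → L v ≠ 3 → ∑ u, A v u = 1)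
    (hk : 3 ≤ k) (hD : 1 ≤ D) {w : V} (hw : L w = 1) {m : ℕ} (hm : m ≤ k - 1) :
    ∑ x, (A ^ m) w x ≤ D ^ 4 := by
  cases m with
  | zero => exact (sum_pow_zero_apply A w).trans_le (Nat.one_le_pow _ _ hD)
  | succ m =>
    have hsucc (u : V) (hu : A w u ≠ 0) : ∑ x, (A ^ m) u x ≤ D ^ 3 := by
      rcases h3 w hw u hu with hu2 | hu3
      · exact sum_pow_apply_le_of_layer_two h1 h2 h4 h5 hk hD hu2 (by omega)
      · exact (sum_pow_apply_le_of_layer_three h1 h2 h4 h5 hk hD hu3 (by omega)).trans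
          (Nat.pow_le_pow_right hD (by norm_num))
    calc _ ≤ (∑ u, A w u) * D ^ 3 := sum_pow_succ_apply_le hsucc
      _ ≤ D ^ 4 := by rw [pow_succ' D 3]; exact Nat.mul_le_mul_right _ (h1 w)

theorem sum_pow_apply_le_pow_four (h1 : ∀ v : V, ∑ u, A v u ≤ D)
    (h2 : ∀ v : V, L v ≠ 1 → L v ≠ 3 → ∀ u : V, A v u ≠ 0 → L u = L v + 1)
    (h3 : ∀ v : V, L v = 1 → ∀ u : V, A v u ≠ 0 → L u = 2 ∨ L u = 3)
    (h4 : ∀ v : V, L v = 3 → ∀ u : V, A v u ≠ 0 →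
      (L u = 3 ∨ L u = 4) ∧ (L u = 3 → ∀ w : V, A u w ≠ 0 → L w = 4))
    (h5 : ∀ v : V, L v ≠ 1 → L v ≠ 2 → L v ≠ 3 → ∑ u, A v u = 1)
    (hk : 3 ≤ k) (hD : 1 ≤ D) (w : V) {m : ℕ} (hm : m ≤ k - 1) :
    ∑ x, (A ^ m) w x ≤ D ^ 4 := by
  by_cases hw1 : L w = 1
  · exact sum_pow_apply_le_of_layer_one h1 h2 h3 h4 h5 hk hD hw1 hm
  by_cases hw2 : L w = 2
  · exact (sum_pow_apply_le_of_layer_two h1 h2 h4 h5 hk hD hw2 hm).trans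
      (Nat.pow_le_pow_right hD (by norm_num))
  by_cases hw3 : L w = 3
  · exact (sum_pow_apply_le_of_layer_three h1 h2 h4 h5 hk hD hw3 hm).trans
      (Nat.pow_le_pow_right hD (by norm_num))
  have : NeZero k := ⟨by omega⟩
  set j := (1 - L w).val
  have hjw : L w + j = 1 := by rw [ZMod.natCast_zmod_val]; ring
  have hj : j + 3 ≤ k := by
    have hjk : j < k := ZMod.val_lt _
    by_contra
    obtain hj1 | hj2 : j + 1 = k ∨ j + 2 = k := by omega
    · have hj1' : ((j + 1 : ℕ) : ZMod k) = 0 := by rw [hj1, ZMod.natCast_self]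
      push_cast at hj1'
      exact hw2 (by linear_combination hjw - hj1')
    · have hj2' : ((j + 2 : ℕ) : ZMod k) = 0 := by rw [hj2, ZMod.natCast_self]
      push_cast at hj2'
      exact hw3 (by linear_combination hjw - hj2')
  have hone (u : V) (hu : L u = 1) (n : ℕ) (hn : n ≤ k - 1) : ∑ x, (A ^ n) u x ≤ D ^ 4 :=
    sum_pow_apply_le_of_layer_one h1 h2 h3 h4 h5 hk hD hu hn
  simpa using sum_pow_apply_le_of_add_eq_one h2 h5 (g := fun _ => D ^ 4) (N := k - 1)
    (Nat.one_le_pow _ _ hD) hone hj hjw (by omega)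

end Layered

/-- Lemma on layered sparse digraphs (Lemma 3.3 of the paper): under the stated layer
conditions, the number of directed paths of length `k-1` starting at any vertex,
i.e. any row sum of `A^(k-1)`, is at most `4 * D^4`. -/
theorem stmt_2 {V : Type*} [Fintype V] [DecidableEq V]
    (k D : ℕ) (hk : 5 ≤ k)
    (A : Matrix V V ℕ) (L : V → ZMod k)
    (h1 : ∀ v : V, ∑ u, A v u ≤ D)
    (h2 : ∀ v : V, L v ≠ 1 → L v ≠ 3 →
      ∀ u : V, A v u ≠ 0 → L u = L v + 1)
    (h3 : ∀ v : V, L v = 1 → ∀ u : V, A v u ≠ 0 → L u = 2 ∨ L u = 3)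
    (h4 : ∀ v : V, L v = 3 → ∀ u : V, A v u ≠ 0 →
      (L u = 3 ∨ L u = 4) ∧ (L u = 3 → ∀ w : V, A u w ≠ 0 → L w = 4))
    (h5 : ∀ v : V, L v ≠ 1 → L v ≠ 2 → L v ≠ 3 → ∑ u, A v u = 1) :
    ∀ v : V, ∑ u, (A ^ (k - 1)) v u ≤ 4 * D ^ 4 := by
  intro v
  rcases Nat.eq_zero_or_pos D with rfl | hD
  · calc _ ≤ 0 ^ (k - 1) := Matrix.sum_pow_apply_le_pow h1 _ v
      _ = 0 := zero_pow (by omega)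
      _ ≤ _ := Nat.zero_le _
  · calc _ ≤ D ^ 4 := sum_pow_apply_le_pow_four h1 h2 h3 h4 h5 (by omega) hD v le_rfl
      _ ≤ 4 * D ^ 4 := Nat.le_mul_of_pos_left _ (by norm_num)
end

section
/- Let k ≥ 5 and D be natural numbers, V a nonempty finite set, A : V × V → ℕ a nonnegative integer matrix, and L : V → ℤ/kℤ a layer assignment satisfying: (1) for each v ∈ V, ∑_u A(v,u) ≤ D; (2) for each v with L(v) ∉ {1,3} and each u with A(v,u) ≠ 0, L(u) = L(v) + 1; (3) for each v with L(v) = 1 and each u with A(v,u) ≠ 0, L(u) ∈ {2,3}; (4) for each v with L(v) = 3 and each u with A(v,u) ≠ 0, L(u) ∈ {3,4}, and moreover if L(u) = 3 then every w with A(u,w) ≠ 0 satisfies L(w) = 4; (5) for each v with L(v) ∉ {1,2,3}, ∑_u A(v,u) = 1. If λ ≥ 0 is a real number and w is a vector with all entries strictly positive such that A·w = λ·w (viewing A as a real matrix), then λ^{k-1} ≤ 4·D^4. -/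
/-!
Walk greedily from a vertex `v₀` where `w` is maximal, always stepping from `x` to a successor `y`
of largest weight, so that `λ w x ≤ (∑ᵤ A x u) w y`. The row sums are `1` outside the layers
`1, 2, 3` and at most `D` inside them, hence `λ^(k-1) w v₀ ≤ D^b w v₀`, where `b` counts the visits
to layers `1, 2, 3` during the first `k - 1` steps. The layer rules force a walk that enters these
layers to reach layer `4` within four steps and then to pass one by one through the `k - 3` layers
`4, …, k - 1, 0`, so `b ≤ 4`.
-/

open Finset

def IsBranchLayer {k : ℕ} (a : ZMod k) : Prop := a = 1 ∨ a = 2 ∨ a = 3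

instance {k : ℕ} (a : ZMod k) : Decidable (IsBranchLayer a) :=
  inferInstanceAs (Decidable (_ ∨ _ ∨ _))

lemma not_isBranchLayer_natCast {k m : ℕ} (h4 : 4 ≤ m) (hm : m ≤ k) :
    ¬ IsBranchLayer (m : ZMod k) := by
  have hmod : m % k = 0 ∨ 4 ≤ m % k := by
    obtain hm | rfl := hm.lt_or_eq
    · exact .inr (by rwa [Nat.mod_eq_of_lt hm])
    · exact .inl (Nat.mod_self m)
  have hval := ZMod.val_natCast k m
  rintro (h | h | h) <;> rw [h] at hval
  · rw [ZMod.val_one'' (by omega)] at hval; omega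
  · rw [ZMod.val_ofNat_of_lt (show 2 < k by omega)] at hval; norm_num at hval; omega
  · rw [ZMod.val_ofNat_of_lt (show 3 < k by omega)] at hval; norm_num at hval; omega

structure IsLayerWalk {k : ℕ} (ℓ : ℕ → ZMod k) : Prop where
  succ_of_ne : ∀ n, ℓ n ≠ 1 → ℓ n ≠ 3 → ℓ (n + 1) = ℓ n + 1
  succ_of_eq_one : ∀ n, ℓ n = 1 → ℓ (n + 1) = 2 ∨ ℓ (n + 1) = 3
  succ_of_eq_three : ∀ n, ℓ n = 3 → ℓ (n + 1) = 3 ∨ ℓ (n + 1) = 4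
  add_two_of_eq_three : ∀ n, ℓ n = 3 → ℓ (n + 1) = 3 → ℓ (n + 2) = 4

namespace IsLayerWalk

variable {k : ℕ} {ℓ : ℕ → ZMod k}

lemma eq_natCast_of_eq_four (hℓ : IsLayerWalk ℓ) {i : ℕ} (hi : ℓ i = 4) :
    ∀ j ≤ k - 4, ℓ (i + j) = ((4 + j : ℕ) : ZMod k)
  | 0, _ => by simpa using hi
  | j + 1, hj => by
    have ih := hℓ.eq_natCast_of_eq_four hi j (by omega)
    have hnot := not_isBranchLayer_natCast (k := k) (m := 4 + j) (by omega) (by omega)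
    rw [← add_assoc, hℓ.succ_of_ne _ (ih ▸ fun h => hnot (.inl h))
      (ih ▸ fun h => hnot (.inr (.inr h))), ih]
    push_cast
    ring

lemma not_isBranchLayer_of_eq_four (hk : 4 ≤ k) (hℓ : IsLayerWalk ℓ) {i j : ℕ} (hi : ℓ i = 4)
    (hj : j ≤ k - 4) : ¬ IsBranchLayer (ℓ (i + j)) := by
  rw [hℓ.eq_natCast_of_eq_four hi j hj]
  exact not_isBranchLayer_natCast (by omega) (by omega)

lemma exists_eq_four_of_eq_three (hℓ : IsLayerWalk ℓ) {i : ℕ} (hi : ℓ i = 3) :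
    ∃ d, 1 ≤ d ∧ d ≤ 2 ∧ ℓ (i + d) = 4 := by
  obtain h | h := hℓ.succ_of_eq_three i hi
  · exact ⟨2, by omega, le_rfl, hℓ.add_two_of_eq_three i hi h⟩
  · exact ⟨1, le_rfl, by omega, h⟩

lemma exists_eq_four_of_eq_two (hk : 1 < k) (hℓ : IsLayerWalk ℓ) {i : ℕ} (hi : ℓ i = 2) :
    ∃ d, 1 ≤ d ∧ d ≤ 3 ∧ ℓ (i + d) = 4 := by
  have : Fact (1 < k) := ⟨hk⟩
  have h3 : ℓ (i + 1) = 3 := by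
    rw [hℓ.succ_of_ne i (fun h => one_ne_zero (by linear_combination hi.symm.trans h))
      (fun h => one_ne_zero (by linear_combination h.symm.trans hi)), hi]
    norm_num
  obtain ⟨d, hd1, hd2, hd⟩ := hℓ.exists_eq_four_of_eq_three h3
  exact ⟨d + 1, by omega, by omega, by rwa [← add_assoc, add_right_comm]⟩

lemma exists_eq_four_of_isBranchLayer (hk : 1 < k) (hℓ : IsLayerWalk ℓ) {i : ℕ}
    (hi : IsBranchLayer (ℓ i)) : ∃ d, 1 ≤ d ∧ d ≤ 4 ∧ ℓ (i + d) = 4 := by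
  obtain h1 | h2 | h3 := hi
  · obtain h2 | h3 := hℓ.succ_of_eq_one i h1
    · obtain ⟨d, hd1, hd2, hd⟩ := hℓ.exists_eq_four_of_eq_two hk h2
      exact ⟨d + 1, by omega, by omega, by rwa [← add_assoc, add_right_comm]⟩
    · obtain ⟨d, hd1, hd2, hd⟩ := hℓ.exists_eq_four_of_eq_three h3
      exact ⟨d + 1, by omega, by omega, by rwa [← add_assoc, add_right_comm]⟩
  · obtain ⟨d, hd1, hd2, hd⟩ := hℓ.exists_eq_four_of_eq_two hk h2
    exact ⟨d, hd1, by omega, hd⟩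
  · obtain ⟨d, hd1, hd2, hd⟩ := hℓ.exists_eq_four_of_eq_three h3
    exact ⟨d, hd1, by omega, hd⟩

lemma card_isBranchLayer_le (hk : 4 ≤ k) (hℓ : IsLayerWalk ℓ) :
    #{i ∈ range (k - 1) | IsBranchLayer (ℓ i)} ≤ 4 := by
  set S := {i ∈ range (k - 1) | IsBranchLayer (ℓ i)}
  obtain hS | hS := S.eq_empty_or_nonempty
  · simp [hS]
  obtain ⟨i, hiS, hmin⟩ := S.exists_min_image id hS
  obtain ⟨d, hd1, hd4, hd⟩ := hℓ.exists_eq_four_of_isBranchLayer (by omega) (mem_filter.1 hiS).2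
  -- From layer 4 at `i + d` the walk runs through the `k - 3` layers `4, …, k - 1, 0`.
  have hsub : S ⊆ Ico i (i + d) ∪ Ico (i + d + (k - 3)) (k - 1) := by
    intro m hm
    obtain ⟨hmk, hmB⟩ := mem_filter.1 hm
    have him : i ≤ m := hmin m hm
    by_contra hout
    simp only [mem_union, mem_Ico, mem_range, not_or, not_and, not_lt] at hout hmk
    have hnot := hℓ.not_isBranchLayer_of_eq_four hk hd (j := m - (i + d)) (by omega)
    rw [Nat.add_sub_cancel' (by omega)] at hnot
    exact hnot hmB
  calc #S ≤ #(Ico i (i + d) ∪ Ico (i + d + (k - 3)) (k - 1)) := card_le_card hsub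
    _ ≤ #(Ico i (i + d)) + #(Ico (i + d + (k - 3)) (k - 1)) := card_union_le _ _
    _ ≤ 4 := by simp only [Nat.card_Ico]; omega

end IsLayerWalk

lemma exists_ne_zero_sum_mul_le {ι : Type*} [Fintype ι] (a : ι → ℕ) (w : ι → ℝ)
    (ha : ∃ u, a u ≠ 0) : ∃ y, a y ≠ 0 ∧ ∑ u, (a u : ℝ) * w u ≤ ((∑ u, a u : ℕ) : ℝ) * w y := by
  obtain ⟨u₀, hu₀⟩ := ha
  obtain ⟨y, hy, hmax⟩ := exists_max_image {u | a u ≠ 0} w ⟨u₀, by simpa using hu₀⟩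
  refine ⟨y, (mem_filter.1 hy).2, ?_⟩
  rw [Nat.cast_sum, sum_mul]
  refine sum_le_sum fun u _ => ?_
  obtain hu | hu := eq_or_ne (a u) 0
  · simp [hu]
  · exact mul_le_mul_of_nonneg_left (hmax u (by simpa using hu)) (Nat.cast_nonneg _)

lemma eigenvalue_nonneg_of_pos {V : Type*} [Fintype V] [Nonempty V] (A : Matrix V V ℕ)
    {lam : ℝ} {w : V → ℝ} (hw : ∀ v, 0 < w v)
    (heig : ∀ v, ∑ u, (A v u : ℝ) * w u = lam * w v) : 0 ≤ lam := by
  let v := Classical.arbitrary V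
  refine (mul_nonneg_iff_of_pos_right (hw v)).1 (heig v ▸ sum_nonneg fun u _ => ?_)
  exact mul_nonneg (Nat.cast_nonneg _) (hw u).le

lemma exists_successor_of_eigenvector {V : Type*} [Fintype V] (A : Matrix V V ℕ) {lam : ℝ}
    (hlam : 0 < lam) {w : V → ℝ} (hw : ∀ v, 0 < w v)
    (heig : ∀ v, ∑ u, (A v u : ℝ) * w u = lam * w v) :
    ∃ f : V → V, (∀ x, A x (f x) ≠ 0) ∧ ∀ x, lam * w x ≤ ((∑ u, A x u : ℕ) : ℝ) * w (f x) := by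
  have hrow : ∀ x, ∃ u, A x u ≠ 0 := by
    intro x
    by_contra! h
    have := heig x
    simp only [h, Nat.cast_zero, zero_mul, sum_const_zero] at this
    exact (mul_pos hlam (hw x)).ne this
  choose f hf using fun x => exists_ne_zero_sum_mul_le (A x) w (hrow x)
  exact ⟨f, fun x => (hf x).1, fun x => heig x ▸ (hf x).2⟩

lemma pow_mul_le_prod_mul_iterate {V : Type*} (f : V → V) {c w : V → ℝ} {lam : ℝ}
    (hlam : 0 ≤ lam) (hc : ∀ x, 0 ≤ c x) (hstep : ∀ x, lam * w x ≤ c x * w (f x)) (n : ℕ)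
    (x : V) : lam ^ n * w x ≤ (∏ i ∈ range n, c (f^[i] x)) * w (f^[n] x) := by
  induction n generalizing x with
  | zero => simp
  | succ n ih =>
    calc lam ^ (n + 1) * w x = lam ^ n * (lam * w x) := by ring
      _ ≤ lam ^ n * (c x * w (f x)) := mul_le_mul_of_nonneg_left (hstep x) (by positivity)
      _ = c x * (lam ^ n * w (f x)) := by ring
      _ ≤ c x * ((∏ i ∈ range n, c (f^[i] (f x))) * w (f^[n] (f x))) :=
        mul_le_mul_of_nonneg_left (ih (f x)) (hc x)
      _ = (∏ i ∈ range (n + 1), c (f^[i] x)) * w (f^[n + 1] x) := by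
        simp only [prod_range_succ', Function.iterate_succ_apply, Function.iterate_zero_apply]
        ring

lemma pow_le_prod_iterate {V : Type*} (f : V → V) {c w : V → ℝ} {lam : ℝ}
    (hlam : 0 ≤ lam) (hc : ∀ x, 0 ≤ c x) (hstep : ∀ x, lam * w x ≤ c x * w (f x))
    (hw : ∀ v, 0 < w v) {x₀ : V} (hmax : ∀ x, w x ≤ w x₀) (n : ℕ) :
    lam ^ n ≤ ∏ i ∈ range n, c (f^[i] x₀) := by
  refine le_of_mul_le_mul_right ((pow_mul_le_prod_mul_iterate f hlam hc hstep n x₀).trans ?_)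
    (hw x₀)
  exact mul_le_mul_of_nonneg_left (hmax _) (prod_nonneg fun i _ => hc _)

lemma rowSum_le_ite {V : Type*} [Fintype V] {k D : ℕ} {A : Matrix V V ℕ} {L : V → ZMod k}
    (h1 : ∀ v : V, ∑ u, A v u ≤ D)
    (h5 : ∀ v : V, L v ≠ 1 → L v ≠ 2 → L v ≠ 3 → ∑ u, A v u = 1) (x : V) :
    ((∑ u, A x u : ℕ) : ℝ) ≤ if IsBranchLayer (L x) then (D : ℝ) else 1 := by
  split_ifs with hx
  · exact_mod_cast h1 x
  · simp only [IsBranchLayer, not_or] at hx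
    rw [h5 x hx.1 hx.2.1 hx.2.2, Nat.cast_one]

lemma isLayerWalk_iterate {V : Type*} {k : ℕ} (A : Matrix V V ℕ) (L : V → ZMod k)
    (h2 : ∀ v : V, L v ≠ 1 → L v ≠ 3 → ∀ u : V, A v u ≠ 0 → L u = L v + 1)
    (h3 : ∀ v : V, L v = 1 → ∀ u : V, A v u ≠ 0 → L u = 2 ∨ L u = 3)
    (h4 : ∀ v : V, L v = 3 → ∀ u : V, A v u ≠ 0 →
      (L u = 3 ∨ L u = 4) ∧ (L u = 3 → ∀ w : V, A u w ≠ 0 → L w = 4))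
    {f : V → V} (hf : ∀ x, A x (f x) ≠ 0) (v : V) : IsLayerWalk fun n => L (f^[n] v) := by
  have hstep : ∀ n, A (f^[n] v) (f^[n + 1] v) ≠ 0 := fun n => by
    rw [Function.iterate_succ_apply']; exact hf _
  exact
    { succ_of_ne := fun n h1 h3' => h2 _ h1 h3' _ (hstep n)
      succ_of_eq_one := fun n h => h3 _ h _ (hstep n)
      succ_of_eq_three := fun n h => (h4 _ h _ (hstep n)).1
      add_two_of_eq_three := fun n h h' => (h4 _ h _ (hstep n)).2 h' _ (hstep (n + 1)) }

theorem stmt_3_general {V : Type*} [Fintype V] [Nonempty V]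
    (k D : ℕ) (hk : 5 ≤ k)
    (A : Matrix V V ℕ) (L : V → ZMod k)
    (h1 : ∀ v : V, ∑ u, A v u ≤ D)
    (h2 : ∀ v : V, L v ≠ 1 → L v ≠ 3 →
      ∀ u : V, A v u ≠ 0 → L u = L v + 1)
    (h3 : ∀ v : V, L v = 1 → ∀ u : V, A v u ≠ 0 → L u = 2 ∨ L u = 3)
    (h4 : ∀ v : V, L v = 3 → ∀ u : V, A v u ≠ 0 →
      (L u = 3 ∨ L u = 4) ∧ (L u = 3 → ∀ w : V, A u w ≠ 0 → L w = 4))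
    (h5 : ∀ v : V, L v ≠ 1 → L v ≠ 2 → L v ≠ 3 → ∑ u, A v u = 1)
    (lam : ℝ) (w : V → ℝ) (hw : ∀ v, 0 < w v)
    (heig : ∀ v : V, ∑ u, (A v u : ℝ) * w u = lam * w v) :
    lam ^ (k - 1) ≤ 4 * (D : ℝ) ^ 4 := by
  obtain rfl | hlam := (eigenvalue_nonneg_of_pos A hw heig).eq_or_lt
  · rw [zero_pow (by omega)]
    positivity
  obtain ⟨f, hfA, hfw⟩ := exists_successor_of_eigenvector A hlam hw heig
  obtain ⟨v₀, hv₀⟩ := Finite.exists_max w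
  have hD : (1 : ℝ) ≤ D := by
    exact_mod_cast (Nat.one_le_iff_ne_zero.2 (hfA v₀)).trans
      ((single_le_sum (fun _ _ => Nat.zero_le _) (mem_univ _)).trans (h1 v₀))
  have hstep (x : V) : lam * w x ≤ (if IsBranchLayer (L x) then (D : ℝ) else 1) * w (f x) :=
    (hfw x).trans (mul_le_mul_of_nonneg_right (rowSum_le_ite h1 h5 x) (hw _).le)
  calc lam ^ (k - 1) ≤ ∏ i ∈ range (k - 1), if IsBranchLayer (L (f^[i] v₀)) then (D : ℝ) else 1 :=
        pow_le_prod_iterate f hlam.le (fun x => by split <;> positivity) hstep hw hv₀ (k - 1)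
    _ = (D : ℝ) ^ #{i ∈ range (k - 1) | IsBranchLayer (L (f^[i] v₀))} := by
        rw [prod_ite, prod_const, prod_const, one_pow, mul_one]
    _ ≤ (D : ℝ) ^ 4 :=
        pow_le_pow_right₀ hD ((isLayerWalk_iterate A L h2 h3 h4 hfA v₀).card_isBranchLayer_le
          (by omega))
    _ ≤ 4 * (D : ℝ) ^ 4 := by linarith [pow_nonneg (zero_le_one.trans hD) 4]

/-- Under the layer conditions of Lemma 3.3, any nonnegative eigenvalue `λ` of `A`
admitting a strictly positive eigenvector satisfies `λ^(k-1) ≤ 4 * D^4`. -/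
theorem stmt_3 {V : Type*} [Fintype V] [Nonempty V] [DecidableEq V]
    (k D : ℕ) (hk : 5 ≤ k)
    (A : Matrix V V ℕ) (L : V → ZMod k)
    (h1 : ∀ v : V, ∑ u, A v u ≤ D)
    (h2 : ∀ v : V, L v ≠ 1 → L v ≠ 3 →
      ∀ u : V, A v u ≠ 0 → L u = L v + 1)
    (h3 : ∀ v : V, L v = 1 → ∀ u : V, A v u ≠ 0 → L u = 2 ∨ L u = 3)
    (h4 : ∀ v : V, L v = 3 → ∀ u : V, A v u ≠ 0 →
      (L u = 3 ∨ L u = 4) ∧ (L u = 3 → ∀ w : V, A u w ≠ 0 → L w = 4))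
    (h5 : ∀ v : V, L v ≠ 1 → L v ≠ 2 → L v ≠ 3 → ∑ u, A v u = 1)
    (lam : ℝ) (hlam : 0 ≤ lam) (w : V → ℝ) (hw : ∀ v, 0 < w v)
    (heig : ∀ v : V, ∑ u, (A v u : ℝ) * w u = lam * w v) :
    lam ^ (k - 1) ≤ 4 * (D : ℝ) ^ 4 :=
  stmt_3_general k D hk A L h1 h2 h3 h4 h5 lam w hw heig
end

section
/- Let n, k ≥ 6 be coprime integers, let n̄ and k̄ be defined by the rule m̄ = (m−1)/2 if m is odd, m̄ = (m−2)/2 if m ≡ 0 (mod 4), m̄ = (m−4)/2 if m ≡ 2 (mod 4), and let c be a positive integer satisfying c·n·k̄ ≡ 1 (mod k) and c·k·n̄ ≡ 1 (mod n). Define a directed graph Γ̄ on the vertex set (ℤ/nℤ) × (ℤ/kℤ) with an oriented edge from (i,j) to (i',j') if and only if either (i' = i + c and j' = j + c), or ((i,j) ∈ {(0,1), (0,−1), (1,0), (−1,0)} and (i',j') = (c,c)), where c is reduced modulo n and modulo k respectively. Then every directed cycle in Γ̄ has length ℓ satisfying 7·ℓ > n·k. -/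
/-!
Away from the four axis units `(0, ±1)`, `(±1, 0)` every edge of `Γ̄` adds `(c, c)`. A cycle using
only such edges has `ℓ • (c, c) = 0`, and since `c` is a unit modulo `n` and modulo `k`, `nk ∣ ℓ`.
Otherwise the cycle jumps from an axis unit to `(c, c)` and, after `t ≤ ℓ` steps in all, first
meets an axis unit again at `t • (c, c)`. If that is `(0, ±1)` then `t = ns`, and multiplying
`s·nc ≡ ±1 (mod k)` by `k̄` gives `s ≡ ±k̄ (mod k)`; since `k/7 < k̄ < k/2`, this forces `7s > k`.
-/

/-- The residue `m̄` used in Theorem 4.1. -/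
def bar (m : ℕ) : ℕ :=
  if m % 2 = 1 then (m - 1) / 2
  else if m % 4 = 0 then (m - 2) / 2
  else (m - 4) / 2

lemma lt_seven_mul_bar {m : ℕ} (hm : 6 ≤ m) : m < 7 * bar m := by
  unfold bar; split_ifs <;> omega

lemma two_mul_bar_lt {m : ℕ} (hm : 6 ≤ m) : 2 * bar m < m := by
  unfold bar; split_ifs <;> omega

lemma le_of_natCast_eq_natCast {k s b : ℕ} (hb : b < k) (h : (s : ZMod k) = b) : b ≤ s := by
  have h' := congrArg ZMod.val h
  rw [ZMod.val_natCast, ZMod.val_natCast_of_lt hb] at h'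
  exact h' ▸ Nat.mod_le s k

lemma le_add_of_natCast_eq_neg {k s b : ℕ} (hb : 0 < b) (h : (s : ZMod k) = -b) :
    k ≤ s + b := by
  have hdvd : k ∣ s + b := by
    rw [← ZMod.natCast_eq_zero_iff, Nat.cast_add, h, neg_add_cancel]
  exact Nat.le_of_dvd (by omega) hdvd

lemma apply_add_natCast_eq_add_nsmul {I R : Type*} [AddMonoidWithOne I] [AddMonoid R]
    (x : I → R) (d : R) (i : I) (t : ℕ)
    (h : ∀ s < t, x (i + s + 1) = x (i + s) + d) : x (i + t) = x i + t • d := by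
  induction t with
  | zero => simp
  | succ t ih =>
    rw [Nat.cast_succ, ← add_assoc, h t t.lt_succ_self, ih fun s hs => h s (by omega),
      succ_nsmul, add_assoc]

section Cycle

variable {R : Type*} [AddGroup R] {ℓ : ℕ} {x : ZMod ℓ → R} {c : R} {P : R → Prop}

lemma nsmul_eq_zero_of_forall_step (h : ∀ i, x (i + 1) = x i + c) : ℓ • c = 0 := by
  have := apply_add_natCast_eq_add_nsmul x c 0 ℓ fun s _ => h _
  rwa [ZMod.natCast_self, add_zero, left_eq_add] at this

lemma exists_nsmul_of_jump (hℓ : 1 ≤ ℓ)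
    (hstep : ∀ i, x (i + 1) = x i + c ∨ (P (x i) ∧ x (i + 1) = c))
    {i₀ : ZMod ℓ} (hP : P (x i₀)) (hjump : x (i₀ + 1) = c) :
    ∃ t ≤ ℓ, P (t • c) := by
  classical
  have hex : ∃ t : ℕ, 1 ≤ t ∧ P (x (i₀ + t)) := ⟨ℓ, hℓ, by rwa [ZMod.natCast_self, add_zero]⟩
  obtain ⟨ht, hPt⟩ := Nat.find_spec hex
  set t := Nat.find hex
  have hdiag : ∀ s < t - 1, x (i₀ + 1 + s + 1) = x (i₀ + 1 + s) + c := by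
    intro s hs
    have hnP : ¬ P (x (i₀ + (s + 1 : ℕ))) := fun hP' =>
      Nat.find_min hex (by omega) ⟨by omega, hP'⟩
    push_cast [← add_assoc] at hnP
    rw [add_assoc i₀ 1, add_comm 1 (s : ZMod ℓ), ← add_assoc]
    exact (hstep _).resolve_right fun h => hnP h.1
  refine ⟨t, Nat.find_le ⟨hℓ, by rwa [ZMod.natCast_self, add_zero]⟩, ?_⟩
  have := apply_add_natCast_eq_add_nsmul x c (i₀ + 1) (t - 1) hdiag
  rw [hjump, add_assoc, ← Nat.cast_one, ← Nat.cast_add, Nat.add_sub_cancel' ht] at this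
  rwa [this, ← succ_nsmul', Nat.sub_add_cancel ht] at hPt

end Cycle

def IsAxisUnit {n k : ℕ} (p : ZMod n × ZMod k) : Prop :=
  p = (0, 1) ∨ p = (0, -1) ∨ p = (1, 0) ∨ p = (-1, 0)

section Torus

variable {n k c t : ℕ}

lemma dvd_of_natCast_mul_eq_zero (hcn : c.Coprime n) (h : (t : ZMod n) * c = 0) :
    n ∣ t :=
  hcn.symm.dvd_of_dvd_mul_right <| (ZMod.natCast_eq_zero_iff _ _).mp (by exact_mod_cast h)

lemma mul_lt_seven_mul_of_natCast_mul_eq (hn : 0 < n) (hk : 6 ≤ k)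
    (hc : c * n * bar k ≡ 1 [MOD k]) (hcn : c.Coprime n) (h0 : (t : ZMod n) * c = 0)
    (h1 : (t : ZMod k) * c = 1 ∨ (t : ZMod k) * c = -1) : n * k < 7 * t := by
  obtain ⟨s, rfl⟩ := dvd_of_natCast_mul_eq_zero hcn h0
  have hinv : (c : ZMod k) * n * bar k = 1 := by
    exact_mod_cast (ZMod.natCast_eq_natCast_iff _ _ _).mpr hc
  have hs : (s : ZMod k) = ((n * s : ℕ) : ZMod k) * c * bar k := by
    push_cast; linear_combination (-(s : ZMod k)) * hinv
  have hbar := lt_seven_mul_bar hk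
  have hks : k < 7 * s := by
    rcases h1 with h1 | h1
    · rw [h1, one_mul] at hs
      have := le_of_natCast_eq_natCast (by have := two_mul_bar_lt hk; omega) hs
      omega
    · rw [h1, neg_one_mul] at hs
      have := le_add_of_natCast_eq_neg (by omega) hs
      have := two_mul_bar_lt hk
      omega
  calc n * k < n * (7 * s) := Nat.mul_lt_mul_of_pos_left hks hn
    _ = 7 * (n * s) := by ring

lemma mul_lt_seven_mul_of_isAxisUnit (hn : 6 ≤ n) (hk : 6 ≤ k)
    (hc₁ : c * n * bar k ≡ 1 [MOD k]) (hc₂ : c * k * bar n ≡ 1 [MOD n])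
    (hcn : c.Coprime n) (hck : c.Coprime k)
    (h : IsAxisUnit (t • (c : ZMod n × ZMod k))) : n * k < 7 * t := by
  simp only [IsAxisUnit, Prod.ext_iff, nsmul_eq_mul, Prod.fst_mul, Prod.snd_mul,
    Prod.fst_natCast, Prod.snd_natCast] at h
  rcases h with ⟨h0, h1⟩ | ⟨h0, h1⟩ | ⟨h1, h0⟩ | ⟨h1, h0⟩
  · exact mul_lt_seven_mul_of_natCast_mul_eq (by omega) hk hc₁ hcn h0 (.inl h1)
  · exact mul_lt_seven_mul_of_natCast_mul_eq (by omega) hk hc₁ hcn h0 (.inr h1)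
  · rw [mul_comm n]; exact mul_lt_seven_mul_of_natCast_mul_eq (by omega) hn hc₂ hck h0 (.inl h1)
  · rw [mul_comm n]; exact mul_lt_seven_mul_of_natCast_mul_eq (by omega) hn hc₂ hck h0 (.inr h1)

lemma mul_dvd_of_nsmul_natCast_eq_zero (hnk : n.Coprime k) (hcn : c.Coprime n)
    (hck : c.Coprime k) (h : t • (c : ZMod n × ZMod k) = 0) : n * k ∣ t := by
  simp only [Prod.ext_iff, nsmul_eq_mul, Prod.fst_mul, Prod.snd_mul, Prod.fst_natCast,
    Prod.snd_natCast, Prod.fst_zero, Prod.snd_zero] at h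
  exact hnk.mul_dvd_of_dvd_of_dvd (dvd_of_natCast_mul_eq_zero hcn h.1)
    (dvd_of_natCast_mul_eq_zero hck h.2)

end Torus

theorem stmt_7_general (n k : ℕ) (hn : 6 ≤ n) (hk : 6 ≤ k) (hnk : Nat.Coprime n k)
    (c : ℕ)
    (hc1 : c * n * bar k ≡ 1 [MOD k]) (hc2 : c * k * bar n ≡ 1 [MOD n])
    (ℓ : ℕ) (hℓ : 1 ≤ ℓ) (x : ZMod ℓ → ZMod n × ZMod k)
    (hcyc : ∀ i : ZMod ℓ,
      ((x (i + 1)).1 = (x i).1 + (c : ZMod n) ∧ (x (i + 1)).2 = (x i).2 + (c : ZMod k)) ∨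
      ((x i = ((0 : ZMod n), (1 : ZMod k)) ∨ x i = ((0 : ZMod n), (-1 : ZMod k)) ∨
        x i = ((1 : ZMod n), (0 : ZMod k)) ∨ x i = ((-1 : ZMod n), (0 : ZMod k))) ∧
        x (i + 1) = ((c : ZMod n), (c : ZMod k)))) :
    n * k < 7 * ℓ := by
  have hstep : ∀ i, x (i + 1) = x i + c ∨ (IsAxisUnit (x i) ∧ x (i + 1) = c) := by
    intro i
    rcases hcyc i with ⟨h₁, h₂⟩ | ⟨hP, h⟩
    · exact .inl (Prod.ext (by simpa using h₁) (by simpa using h₂))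
    · exact .inr ⟨hP, h.trans (by ext <;> simp)⟩
  have hcn : c.Coprime n := Nat.coprime_of_mul_modEq_one _ (by rwa [mul_assoc] at hc2)
  have hck : c.Coprime k := Nat.coprime_of_mul_modEq_one _ (by rwa [mul_assoc] at hc1)
  by_cases hdiag : ∀ i, x (i + 1) = x i + c
  · have := Nat.le_of_dvd hℓ
      (mul_dvd_of_nsmul_natCast_eq_zero hnk hcn hck (nsmul_eq_zero_of_forall_step hdiag))
    omega
  · obtain ⟨i₀, hi₀⟩ := not_forall.mp hdiag
    obtain ⟨hP, hjump⟩ := (hstep i₀).resolve_left hi₀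
    obtain ⟨t, htℓ, hPt⟩ := exists_nsmul_of_jump hℓ hstep hP hjump
    have := mul_lt_seven_mul_of_isAxisUnit hn hk hc1 hc2 hcn hck hPt
    omega

/-- Lemma 4.2: every directed cycle of the collapsed graph `Γ̄_{n,k}` on
`(ℤ/n) × (ℤ/k)` has length `ℓ` with `7ℓ > nk`. -/
theorem stmt_7 (n k : ℕ) (hn : 6 ≤ n) (hk : 6 ≤ k) (hnk : Nat.Coprime n k)
    (c : ℕ) (hc : 0 < c)
    (hc1 : c * n * bar k ≡ 1 [MOD k]) (hc2 : c * k * bar n ≡ 1 [MOD n])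
    (ℓ : ℕ) (hℓ : 1 ≤ ℓ) (x : ZMod ℓ → ZMod n × ZMod k)
    (hinj : Function.Injective x)
    (hcyc : ∀ i : ZMod ℓ,
      ((x (i + 1)).1 = (x i).1 + (c : ZMod n) ∧ (x (i + 1)).2 = (x i).2 + (c : ZMod k)) ∨
      ((x i = ((0 : ZMod n), (1 : ZMod k)) ∨ x i = ((0 : ZMod n), (-1 : ZMod k)) ∨
        x i = ((1 : ZMod n), (0 : ZMod k)) ∨ x i = ((-1 : ZMod n), (0 : ZMod k))) ∧
        x (i + 1) = ((c : ZMod n), (c : ZMod k)))) :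
    n * k < 7 * ℓ :=
  stmt_7_general n k hn hk hnk c hc1 hc2 ℓ hℓ x hcyc
end

section
/- Let V and W be finite sets, A : V × V → ℕ a nonnegative integer matrix, π : V → W a map, and D ≥ 1, L ≥ 1 natural numbers. Define the quotient digraph on W by: there is an oriented edge from w to w' if and only if there exist v, v' ∈ V with π(v) = w, π(v') = w' and A(v,v') ≠ 0. Assume: (i) the quotient digraph has no directed cycle of length ≤ L; (ii) there is a subset S ⊆ W with |S| ≤ 5 such that every v ∈ V with π(v) ∉ S satisfies ∑_u A(v,u) = 1; (iii) every v ∈ V satisfies ∑_u A(v,u) ≤ D. Then for every v ∈ V, ∑_u (A^L)(v,u) ≤ 326·D^5, i.e., the number of directed paths of length L starting at any vertex is at most 326·D^5. -/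
/-!
Project a walk of length `L` to `W`. A repeated vertex of the projection would give a closed
walk of length at most `L` in the quotient digraph, and a shortest closed subwalk of it is a
directed cycle; so the projection is injective and the walk passes through the classes in `S`
at most `5` times. Only there can it branch, into at most `D` edges each, since every other
vertex has exactly one outgoing edge. Hence there are at most `D ^ 5` walks of length `L` from
any vertex.
-/

open Finset Function

section Walks

variable {α V W : Type*}

def IsWalk (R : α → α → Prop) (n : ℕ) (c : ℕ → α) : Prop :=
  ∀ i < n, R (c i) (c (i + 1))

def IsDirectedCycle (R : α → α → Prop) {ℓ : ℕ} (x : ZMod ℓ → α) : Prop :=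
  Injective x ∧ ∀ i, R (x i) (x (i + 1))

def quotientAdj (A : Matrix V V ℕ) (π : V → W) (w w' : W) : Prop :=
  ∃ v v', π v = w ∧ π v' = w' ∧ A v v' ≠ 0

def seqCons (a : α) (c : ℕ → α) : ℕ → α
  | 0 => a
  | i + 1 => c i

lemma card_filter_range_succ_seqCons (p : α → Prop) [DecidablePred p] (n : ℕ) (a : α)
    (c : ℕ → α) :
    #{i ∈ range (n + 1) | p (seqCons a c i)} =
      #{i ∈ range n | p (c i)} + if p a then 1 else 0 := by
  simp only [card_filter, sum_range_succ']
  rfl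

section Cycles

variable {R : α → α → Prop}

lemma IsWalk.shift {n : ℕ} {c : ℕ → α} (hc : IsWalk R n c) {k m : ℕ} (hkm : k + m ≤ n) :
    IsWalk R m (fun i => c (k + i)) :=
  fun i hi => hc (k + i) (by omega)

lemma IsWalk.seqCons {n : ℕ} {c : ℕ → α} (hc : IsWalk R n c) {a : α} (ha : R a (c 0)) :
    IsWalk R (n + 1) (seqCons a c) := by
  rintro (_ | i) hi
  · exact ha
  · exact hc i (by omega)

lemma ZMod.val_add_one_eq_mod {ℓ : ℕ} [NeZero ℓ] (i : ZMod ℓ) :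
    (i + 1).val = (i.val + 1) % ℓ := by
  rw [ZMod.val_add, ZMod.val_one_eq_one_mod, Nat.add_mod, Nat.mod_mod, ← Nat.add_mod]

lemma isDirectedCycle_of_injOn {ℓ : ℕ} [NeZero ℓ] {y : ℕ → α} (hy : IsWalk R ℓ y)
    (hinj : Set.InjOn y (Set.Iio ℓ)) (hclosed : y ℓ = y 0) :
    IsDirectedCycle R (fun k : ZMod ℓ => y k.val) := by
  refine ⟨fun k k' h => ZMod.val_injective ℓ (hinj (ZMod.val_lt k) (ZMod.val_lt k') h), ?_⟩
  intro i
  have hwrap : y (i + 1).val = y (i.val + 1) := by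
    rw [ZMod.val_add_one_eq_mod]
    rcases Nat.lt_or_ge (i.val + 1) ℓ with hlt | hge
    · rw [Nat.mod_eq_of_lt hlt]
    · rw [show i.val + 1 = ℓ by have := ZMod.val_lt i; omega, Nat.mod_self, hclosed]
  simpa only [hwrap] using hy i.val (ZMod.val_lt i)

lemma exists_isDirectedCycle_of_closed {b : ℕ} (hb : 0 < b) {y : ℕ → α} (hy : IsWalk R b y)
    (hclosed : y b = y 0) :
    ∃ ℓ, 1 ≤ ℓ ∧ ℓ ≤ b ∧ ∃ x : ZMod ℓ → α, IsDirectedCycle R x := by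
  induction b using Nat.strong_induction_on generalizing y with
  | _ b ih =>
  by_cases hinj : Set.InjOn y (Set.Iio b)
  · have : NeZero b := ⟨hb.ne'⟩
    exact ⟨b, hb, le_rfl, _, isDirectedCycle_of_injOn hy hinj hclosed⟩
  obtain ⟨i, hi, j, hj, heq, hij⟩ : ∃ i, i < b ∧ ∃ j, j < b ∧ y i = y j ∧ i < j := by
    simp only [Set.InjOn, Set.mem_Iio, not_forall] at hinj
    obtain ⟨i, hi, j, hj, heq, hne⟩ := hinj
    rcases Nat.lt_or_gt_of_ne hne with h | h
    · exact ⟨i, hi, j, hj, heq, h⟩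
    · exact ⟨j, hj, i, hi, heq.symm, h⟩
  obtain ⟨ℓ, hℓ, hℓb, hcycle⟩ := ih (j - i) (by omega) (by omega)
    (hy.shift (k := i) (by omega)) (by simpa [Nat.add_sub_cancel' hij.le] using heq.symm)
  exact ⟨ℓ, hℓ, by omega, hcycle⟩

lemma injOn_of_isWalk_of_forall_not_isDirectedCycle {n : ℕ} {y : ℕ → α} (hy : IsWalk R n y)
    (hacyclic : ∀ ℓ, 1 ≤ ℓ → ℓ ≤ n → ∀ x : ZMod ℓ → α, ¬IsDirectedCycle R x) :
    Set.InjOn y (Set.Iic n) := by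
  intro i hi j hj heq
  by_contra hne
  wlog hij : i < j generalizing i j
  · exact this hj hi heq.symm (Ne.symm hne) (by omega)
  obtain ⟨ℓ, hℓ, hℓn, x, hx⟩ := exists_isDirectedCycle_of_closed (b := j - i) (by omega)
    (hy.shift (k := i) (by simp only [Set.mem_Iic] at hj; omega))
    (by simpa [Nat.add_sub_cancel' hij.le] using heq.symm)
  exact hacyclic ℓ hℓ (by simp only [Set.mem_Iic] at hj; omega) x hx

end Cycles

section RowSums

variable [Fintype V] [DecidableEq V] (A : Matrix V V ℕ)

lemma rowSum_pow_succ (n : ℕ) (v : V) :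
    ∑ u, (A ^ (n + 1)) v u = ∑ w, A v w * ∑ u, (A ^ n) w u := by
  simp only [pow_succ', Matrix.mul_apply, mul_sum]
  exact sum_comm

lemma rowSum_pow_succ_le {n : ℕ} {v : V} {B : ℕ}
    (hB : ∀ w, A v w ≠ 0 → ∑ u, (A ^ n) w u ≤ B) :
    ∑ u, (A ^ (n + 1)) v u ≤ (∑ w, A v w) * B := by
  rw [rowSum_pow_succ, sum_mul]
  refine sum_le_sum fun w _ => ?_
  by_cases hw : A v w = 0
  · simp [hw]
  · exact Nat.mul_le_mul_left _ (hB w hw)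

lemma exists_isWalk_of_rowSum_pow_ne_zero {n : ℕ} {v : V} (h : ∑ u, (A ^ n) v u ≠ 0) :
    ∃ c : ℕ → V, c 0 = v ∧ IsWalk (fun v w => A v w ≠ 0) n c := by
  induction n generalizing v with
  | zero => exact ⟨fun _ => v, rfl, fun i hi => absurd hi (Nat.not_lt_zero i)⟩
  | succ n ih =>
    rw [rowSum_pow_succ] at h
    obtain ⟨w, -, hw⟩ := exists_ne_zero_of_sum_ne_zero h
    obtain ⟨c, hc0, hc⟩ := ih (right_ne_zero_of_mul hw)
    exact ⟨seqCons v c, rfl, hc.seqCons (hc0 ▸ left_ne_zero_of_mul hw)⟩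

theorem rowSum_pow_le_pow_of_card_filter_le (p : V → Prop) [DecidablePred p] {D : ℕ}
    (hD : 1 ≤ D) (hdeg : ∀ v, ∑ u, A v u ≤ D) (hone : ∀ v, ¬p v → ∑ u, A v u ≤ 1)
    {n b : ℕ} {v : V}
    (hb : ∀ c : ℕ → V, c 0 = v → IsWalk (fun v w => A v w ≠ 0) n c →
      #{i ∈ range n | p (c i)} ≤ b) :
    ∑ u, (A ^ n) v u ≤ D ^ b := by
  induction n generalizing b v with
  | zero => simpa [Matrix.one_apply] using Nat.one_le_pow b D hD
  | succ n ih =>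
    have htail : ∀ w, A v w ≠ 0 → ∀ c : ℕ → V, c 0 = w → IsWalk (fun v w => A v w ≠ 0) n c →
        #{i ∈ range n | p (c i)} + (if p v then 1 else 0) ≤ b := by
      intro w hw c hc0 hc
      rw [← card_filter_range_succ_seqCons]
      exact hb _ rfl (hc.seqCons (hc0 ▸ hw))
    by_cases hv : p v
    · by_cases hzero : ∑ u, (A ^ (n + 1)) v u = 0
      · exact hzero ▸ Nat.zero_le _
      obtain ⟨c, hc0, hc⟩ := exists_isWalk_of_rowSum_pow_ne_zero A hzero
      have hvisit : 0 < #{i ∈ range (n + 1) | p (c i)} :=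
        card_pos.mpr ⟨0, mem_filter.mpr ⟨by simp, hc0 ▸ hv⟩⟩
      obtain ⟨b, rfl⟩ : ∃ b', b = b' + 1 := ⟨b - 1, by have := hb c hc0 hc; omega⟩
      calc ∑ u, (A ^ (n + 1)) v u ≤ (∑ w, A v w) * D ^ b :=
            rowSum_pow_succ_le A fun w hw => ih fun c hc0 hc => by
              simpa [hv] using htail w hw c hc0 hc
        _ ≤ D ^ (b + 1) := by rw [pow_succ']; exact Nat.mul_le_mul_right _ (hdeg v)
    · calc ∑ u, (A ^ (n + 1)) v u ≤ (∑ w, A v w) * D ^ b :=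
            rowSum_pow_succ_le A fun w hw => ih fun c hc0 hc => by
              simpa [hv] using htail w hw c hc0 hc
        _ ≤ D ^ b := by simpa using Nat.mul_le_mul_right (D ^ b) (hone v hv)

end RowSums

lemma IsWalk.map_quotientAdj {A : Matrix V V ℕ} (π : V → W) {n : ℕ} {c : ℕ → V}
    (hc : IsWalk (fun v w => A v w ≠ 0) n c) : IsWalk (quotientAdj A π) n (π ∘ c) :=
  fun i hi => ⟨c i, c (i + 1), rfl, rfl, hc i hi⟩

end Walks

theorem stmt_8_general {V W : Type*} [Fintype V] [Fintype W] [DecidableEq V] [DecidableEq W]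
    (A : Matrix V V ℕ) (π : V → W) (D L : ℕ) (hD : 1 ≤ D)
    (hacyclic : ∀ ℓ : ℕ, 1 ≤ ℓ → ℓ ≤ L → ∀ x : ZMod ℓ → W, Function.Injective x →
      ¬ (∀ i : ZMod ℓ, ∃ v v' : V, π v = x i ∧ π v' = x (i + 1) ∧ A v v' ≠ 0))
    (hS : ∃ S : Finset W, S.card ≤ 5 ∧ ∀ v : V, π v ∉ S → ∑ u, A v u = 1)
    (hdeg : ∀ v : V, ∑ u, A v u ≤ D) :
    ∀ v : V, ∑ u, (A ^ L) v u ≤ 326 * D ^ 5 := by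
  obtain ⟨S, hS5, hSone⟩ := hS
  intro v
  have hvisits : ∀ c : ℕ → V, c 0 = v → IsWalk (fun v w => A v w ≠ 0) L c →
      #{i ∈ range L | π (c i) ∈ S} ≤ 5 := by
    intro c _ hc
    have hinj : Set.InjOn (π ∘ c) (Set.Iic L) :=
      injOn_of_isWalk_of_forall_not_isDirectedCycle (hc.map_quotientAdj π)
        fun ℓ hℓ hℓL x hx => hacyclic ℓ hℓ hℓL x hx.1 hx.2
    calc #{i ∈ range L | π (c i) ∈ S} ≤ #S :=
          card_le_card_of_injOn (π ∘ c) (fun i hi => (mem_filter.mp hi).2)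
            (hinj.mono fun i hi => Set.mem_Iic.mpr (mem_range.mp (mem_filter.mp hi).1).le)
      _ ≤ 5 := hS5
  calc ∑ u, (A ^ L) v u ≤ D ^ 5 :=
        rowSum_pow_le_pow_of_card_filter_le A (fun v => π v ∈ S) hD hdeg
          (fun v hv => (hSone v hv).le) hvisits
    _ ≤ 326 * D ^ 5 := Nat.le_mul_of_pos_left _ (by norm_num)

/-- Lemma 4.3: if the quotient digraph of `A` under `π` has no directed cycle of
length at most `L`, all but at most 5 of the quotient classes have out-degree one
in the multigraph sense, and every out-degree is at most `D`, then every row sum of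
`A^L` (the number of directed paths of length `L` from any vertex) is at most `326·D^5`. -/
theorem stmt_8 {V W : Type*} [Fintype V] [Fintype W] [DecidableEq V] [DecidableEq W]
    (A : Matrix V V ℕ) (π : V → W) (D L : ℕ) (hD : 1 ≤ D) (hL : 1 ≤ L)
    (hacyclic : ∀ ℓ : ℕ, 1 ≤ ℓ → ℓ ≤ L → ∀ x : ZMod ℓ → W, Function.Injective x →
      ¬ (∀ i : ZMod ℓ, ∃ v v' : V, π v = x i ∧ π v' = x (i + 1) ∧ A v v' ≠ 0))
    (hS : ∃ S : Finset W, S.card ≤ 5 ∧ ∀ v : V, π v ∉ S → ∑ u, A v u = 1)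
    (hdeg : ∀ v : V, ∑ u, A v u ≤ D) :
    ∀ v : V, ∑ u, (A ^ L) v u ≤ 326 * D ^ 5 :=
  stmt_8_general A π D L hD hacyclic hS hdeg
end

section
/- There exists a real constant K ≥ 1 such that for every integer n ≥ 2 and every positive integer a with a ≥ K·(log n)², there exists an integer b with a < b ≤ 3·K·a and gcd(b,n) = 1. (Consequently, if the elements of the set S_n = { a ∈ ℕ : a ≥ (log n)², gcd(a,n) = 1 } are listed in increasing order as a_1 < a_2 < ..., then each ratio a_{i+1}/a_i is bounded above by a universal constant independent of n.) -/
/-!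
If every prime in `(a, 3a]` divided `n`, so would their product, whence
`θ(3a) - θ(a) ≤ log n`. Chebyshev's bounds `θ(3a) ≥ 3a log 2 - O(√a log a)` and
`θ(a) ≤ a log 4` give `θ(3a) - θ(a) ≥ a log 2 - o(a)`, which exceeds `√a` for large `a`, while
`a ≥ K (log n)²` with `K ≥ 1` forces `log n ≤ √a`. Taking `K` large makes every admissible `a`
large, since `a ≥ K (log 2)²`.
-/

open Real Filter Asymptotics Finset
open scoped Chebyshev

theorem isLittleO_sqrt_mul_log : (fun x => √x * log x) =o[atTop] id := by
  have h := (isBigO_refl (fun x : ℝ => x ^ (1 / 2 : ℝ)) atTop).mul_isLittleO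
    (isLittleO_log_rpow_atTop (by norm_num : (0 : ℝ) < 1 / 2))
  refine h.congr' ?_ ?_
  · filter_upwards with x
    rw [sqrt_eq_rpow]
  · filter_upwards [eventually_ge_atTop 0] with x hx
    rw [← rpow_add' hx (by norm_num)]
    norm_num

namespace Chebyshev

theorem theta_sub_theta_eq_sum_Ioc {m k : ℕ} (hmk : m ≤ k) :
    θ k - θ m = ∑ p ∈ Ioc m k with p.Prime, log p := by
  simp only [theta, Nat.floor_natCast, sum_filter]
  rw [← sum_Ioc_consecutive _ (Nat.zero_le m) hmk]
  ring

theorem theta_sub_theta_le_log_of_forall_prime_dvd {m k n : ℕ} (hmk : m ≤ k) (hn : n ≠ 0)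
    (hdvd : ∀ p, p.Prime → m < p → p ≤ k → p ∣ n) : θ k - θ m ≤ log n := by
  set P := {p ∈ Ioc m k | p.Prime}
  have hP_dvd : ∏ p ∈ P, p ∣ n := by
    refine prod_primes_dvd n (fun p hp => (mem_filter.1 hp).2.prime) fun p hp => ?_
    obtain ⟨hp, hprime⟩ := mem_filter.1 hp
    exact hdvd p hprime (mem_Ioc.1 hp).1 (mem_Ioc.1 hp).2
  have hP_ne_zero : ∀ p ∈ P, (p : ℝ) ≠ 0 := fun p hp => by
    exact_mod_cast (mem_filter.1 hp).2.ne_zero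
  rw [theta_sub_theta_eq_sum_Ioc hmk, ← log_prod hP_ne_zero, ← Nat.cast_prod]
  exact log_le_log (mod_cast prod_pos fun p hp => (mem_filter.1 hp).2.pos)
    (mod_cast Nat.le_of_dvd (Nat.pos_of_ne_zero hn) hP_dvd)

theorem exists_prime_not_dvd_of_log_lt_theta_sub_theta {m k n : ℕ} (hmk : m ≤ k) (hn : n ≠ 0)
    (h : log n < θ k - θ m) : ∃ p, p.Prime ∧ m < p ∧ p ≤ k ∧ ¬p ∣ n := by
  by_contra! hdvd
  exact (theta_sub_theta_le_log_of_forall_prime_dvd hmk hn hdvd).not_gt h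

theorem eventually_sqrt_lt_theta_three_mul_sub_theta :
    ∀ᶠ a : ℕ in atTop, √a < θ (3 * a) - θ a := by
  -- the four error terms below are each at most `√y log y`, so in total at most `a log 2 / 2`
  have hsmall : ∀ᶠ a : ℕ in atTop, √(3 * a) * log (3 * a) ≤ log 2 / 24 * (3 * a) := by
    have := (tendsto_natCast_atTop_atTop.const_mul_atTop (by norm_num : (0 : ℝ) < 3)).eventually
      (isLittleO_sqrt_mul_log.bound (by positivity : 0 < log 2 / 24))
    filter_upwards [this, eventually_ge_atTop 1] with a ha ha1
    have hlog : 0 ≤ log (3 * a) := log_nonneg (by norm_cast; omega)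
    rwa [norm_of_nonneg (by positivity), id, norm_of_nonneg (by positivity)] at ha
  filter_upwards [hsmall, eventually_ge_atTop 4] with a hsqrt_log ha
  have ha' : (4 : ℝ) ≤ a := mod_cast ha
  set y : ℝ := 3 * a with hy
  have hlog_y : 1 ≤ log y := by
    rw [le_log_iff_exp_le (by positivity)]
    linarith [exp_one_lt_d9]
  have hsqrt_y : 2 ≤ √y := le_sqrt_of_sq_le (by linarith)
  have hsqrt_a : √a ≤ √y * log y :=
    (sqrt_le_sqrt (by linarith)).trans (le_mul_of_one_le_right (sqrt_nonneg y) hlog_y)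
  have hlog_succ : log (y + 1) ≤ √y * log y := calc
    log (y + 1) ≤ log (y ^ 2) := log_le_log (by positivity) (by nlinarith)
    _ = 2 * log y := by rw [log_pow]; norm_num
    _ ≤ √y * log y := by gcongr
  have hlower : y * log 2 - log (y + 1) - 2 * √y * log y ≤ θ y := by
    simpa [hy] using theta_ge (3 * a)
  have hupper : θ a ≤ 2 * log 2 * a := by
    simpa [show log 4 = 2 * log 2 by rw [show (4 : ℝ) = 2 ^ 2 by norm_num, log_pow]; norm_num]
      using theta_le_log4_mul_x (Nat.cast_nonneg a)
  nlinarith [log_pos one_lt_two]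

end Chebyshev

/-- There is a universal constant `K ≥ 1` such that for every `n ≥ 2` and every
positive integer `a ≥ K·(log n)²`, some integer `b` with `a < b ≤ 3K·a` is
coprime to `n`. -/
theorem stmt_9 :
    ∃ K : ℝ, 1 ≤ K ∧ ∀ n : ℕ, 2 ≤ n → ∀ a : ℕ, 0 < a →
      K * (Real.log n) ^ 2 ≤ (a : ℝ) →
      ∃ b : ℕ, a < b ∧ (b : ℝ) ≤ 3 * K * (a : ℝ) ∧ Nat.gcd b n = 1 := by
  obtain ⟨A, hA⟩ := eventually_atTop.1 Chebyshev.eventually_sqrt_lt_theta_three_mul_sub_theta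
  set K := max 1 (A / log 2 ^ 2)
  have hK : 1 ≤ K := le_max_left _ _
  refine ⟨K, hK, fun n hn a _ ha => ?_⟩
  have hA_le : A ≤ a := by
    have hA_K : (A : ℝ) ≤ K * log 2 ^ 2 := by
      rw [← div_le_iff₀ (by positivity)]
      exact le_max_right _ _
    have hlog2 : log 2 ≤ log n := log_le_log two_pos (mod_cast hn)
    exact_mod_cast hA_K.trans (le_trans (by gcongr) ha)
  have hlog_le : log n ≤ √a := le_sqrt_of_sq_le ((le_mul_of_one_le_left (sq_nonneg _) hK).trans ha)
  obtain ⟨p, hp, hap, hpa, hpn⟩ := Chebyshev.exists_prime_not_dvd_of_log_lt_theta_sub_theta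
    (by omega : a ≤ 3 * a) (by omega : n ≠ 0) (by push_cast; exact hlog_le.trans_lt (hA a hA_le))
  refine ⟨p, hap, ?_, (Nat.Prime.coprime_iff_not_dvd hp).2 hpn⟩
  calc (p : ℝ) ≤ 3 * a := mod_cast hpa
    _ ≤ 3 * K * a := by gcongr; exact le_mul_of_one_le_right (by norm_num) hK
end
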